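/- The size bound for the equivalid propositional formula is polynomial: for every contextual propositional formula φ, the formula φ_e satisfies |φ_e| ≤ 8·|φ|⁴. -/
import Mathlib


inductive PForm (α : Type) : Type
  | tru : PForm α
  | fls : PForm α
  | atom : α → PForm α
  | natom : α → PForm α
  | and : PForm α → PForm α → PForm α
  | or : PForm α → PForm α → PForm α

variable {α : Type}

def PForm.eval (v : α → Bool) : PForm α → Bool
  | .tru => true
  | .fls => false
  | .atom a => v a
  | .natom a => !(v a)
  | .and φ ψ => φ.eval v && ψ.eval v
  | .or φ ψ => φ.eval v || ψ.eval v

inductive Ctx (α : Type) : Type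
  | tru : Ctx α
  | fls : Ctx α
  | hole : Ctx α
  | atom : α → Ctx α
  | natom : α → Ctx α
  | and : Ctx α → Ctx α → Ctx α
  | or : Ctx α → Ctx α → Ctx α

/-- Fill every hole of a context with a formula. -/
def Ctx.fill : Ctx α → PForm α → PForm α
  | .tru, _ => .tru
  | .fls, _ => .fls
  | .hole, ψ => ψ
  | .atom a, _ => .atom a
  | .natom a, _ => .natom a
  | .and C D, ψ => .and (C.fill ψ) (D.fill ψ)
  | .or C D, ψ => .or (C.fill ψ) (D.fill ψ)

/-- Negation (De Morgan dual) of an NNF formula. -/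
def PForm.negNNF : PForm α → PForm α
  | .tru => .fls
  | .fls => .tru
  | .atom a => .natom a
  | .natom a => .atom a
  | .and φ ψ => .or φ.negNNF ψ.negNNF
  | .or φ ψ => .and φ.negNNF ψ.negNNF

/-- View an ordinary formula as a (hole-free) context. -/
def PForm.toCtx : PForm α → Ctx α
  | .tru => .tru
  | .fls => .fls
  | .atom a => .atom a
  | .natom a => .natom a
  | .and φ ψ => .and φ.toCtx ψ.toCtx
  | .or φ ψ => .or φ.toCtx ψ.toCtx

def bigAndC : List (Ctx α) → Ctx α := List.foldr Ctx.and Ctx.tru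

/-- Contextual propositional formulas over context variables `γ` and atoms `α`. -/
inductive CForm (γ α : Type) : Type
  | tru : CForm γ α
  | fls : CForm γ α
  | atom : α → CForm γ α
  | natom : α → CForm γ α
  | and : CForm γ α → CForm γ α → CForm γ α
  | or : CForm γ α → CForm γ α → CForm γ α
  | capp : γ → CForm γ α → CForm γ α

variable {γ : Type}

/-- Instantiate the context variables (bottom-up). -/
def CForm.inst (σ : γ → Ctx α) : CForm γ α → PForm α
  | .tru => .tru
  | .fls => .fls
  | .atom a => .atom a
  | .natom a => .natom a
  | .and φ ψ => .and (φ.inst σ) (ψ.inst σ)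
  | .or φ ψ => .or (φ.inst σ) (ψ.inst σ)
  | .capp c φ => (σ c).fill (φ.inst σ)

/-- The context subformulas `c[ψ]` of a contextual formula, as pairs `(c, ψ)`. -/
def CForm.csubs : CForm γ α → List (γ × CForm γ α)
  | .and φ ψ => φ.csubs ++ ψ.csubs
  | .or φ ψ => φ.csubs ++ ψ.csubs
  | .capp c φ => (c, φ) :: φ.csubs
  | _ => []

/-- Decontextualization: replace maximal context subformulas by fresh atoms. -/
def CForm.dec : CForm γ α → PForm (α ⊕ γ × CForm γ α)
  | .tru => .tru
  | .fls => .fls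
  | .atom a => .atom (Sum.inl a)
  | .natom a => .natom (Sum.inl a)
  | .and φ ψ => .and φ.dec ψ.dec
  | .or φ ψ => .or φ.dec ψ.dec
  | .capp c φ => .atom (Sum.inr (c, φ))

def CForm.mapAtoms (f : α → δ) : CForm γ α → CForm γ δ
  | .tru => .tru
  | .fls => .fls
  | .atom a => .atom (f a)
  | .natom a => .natom (f a)
  | .and φ ψ => .and (φ.mapAtoms f) (ψ.mapAtoms f)
  | .or φ ψ => .or (φ.mapAtoms f) (ψ.mapAtoms f)
  | .capp c φ => .capp c (φ.mapAtoms f)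

/-- Implication of NNF formulas: `a → b := ¬a ∨ b`. -/
def impF (a b : PForm α) : PForm α := .or a.negNNF b

def bigAnd : List (PForm α) → PForm α := List.foldr PForm.and PForm.tru

/-- The equivalid formula `φ_e`. -/
def phiE [DecidableEq γ] (φ : CForm γ α) : PForm (α ⊕ γ × CForm γ α) :=
  impF
    (bigAnd ((φ.csubs).flatMap fun x =>
      ((φ.csubs).filter (fun y => decide (y.1 = x.1))).map fun y =>
        impF (impF x.2.dec y.2.dec) (impF (.atom (Sum.inr x)) (.atom (Sum.inr y)))))
    φ.dec

def PForm.size {δ : Type} : PForm δ → ℕ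
  | .and φ ψ => φ.size + ψ.size + 1
  | .or φ ψ => φ.size + ψ.size + 1
  | _ => 1

def CForm.size : CForm γ α → ℕ
  | .and φ ψ => φ.size + ψ.size + 1
  | .or φ ψ => φ.size + ψ.size + 1
  | .capp _ φ => φ.size + 1
  | _ => 1

lemma atom_size (a : α) : (PForm.atom a : PForm α).size = 1 := rfl

lemma arith_key (n : ℕ) (h : 1 ≤ n) :
    (n - 1) * (n - 1) * (2 * n + 4) + 1 + n + 1 ≤ 8 * n ^ 4 := by
  obtain ⟨m, rfl⟩ : ∃ m, n = m + 1 := ⟨n - 1, by omega⟩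
  simp only [Nat.add_sub_cancel]
  nlinarith [sq_nonneg m, sq_nonneg (m * m)]

lemma negNNF_size (p : PForm α) : p.negNNF.size = p.size := by
  induction p <;> simp [PForm.negNNF, PForm.size, *]

lemma impF_size (a b : PForm α) : (impF a b).size = a.size + b.size + 1 := by
  simp [impF, PForm.size, negNNF_size]

lemma pform_size_pos (p : PForm α) : 1 ≤ p.size := by
  cases p <;> simp [PForm.size]

lemma cform_size_pos (φ : CForm γ α) : 1 ≤ φ.size := by
  cases φ <;> simp [CForm.size]

lemma dec_size (φ : CForm γ α) : φ.dec.size ≤ φ.size := by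
  induction φ with
  | and a b iha ihb => simp [CForm.dec, PForm.size, CForm.size]; omega
  | or a b iha ihb => simp [CForm.dec, PForm.size, CForm.size]; omega
  | capp c a ih => simp [CForm.dec, PForm.size, CForm.size]
  | _ => simp [CForm.dec, PForm.size, CForm.size]

lemma csubs_length (φ : CForm γ α) : φ.csubs.length + 1 ≤ φ.size := by
  induction φ with
  | and a b iha ihb => simp [CForm.csubs, CForm.size]; omega
  | or a b iha ihb => simp [CForm.csubs, CForm.size]; omega
  | capp c a ih => simp [CForm.csubs, CForm.size]; omega
  | _ => simp [CForm.csubs, CForm.size]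

lemma csubs_mem_size (φ : CForm γ α) :
    ∀ x ∈ φ.csubs, (x : γ × CForm γ α).2.size + 1 ≤ φ.size := by
  induction φ with
  | and a b iha ihb =>
    intro x hx
    simp only [CForm.csubs, List.mem_append] at hx
    rcases hx with h | h
    · have := iha x h; simp [CForm.size]; omega
    · have := ihb x h; simp [CForm.size]; omega
  | or a b iha ihb =>
    intro x hx
    simp only [CForm.csubs, List.mem_append] at hx
    rcases hx with h | h
    · have := iha x h; simp [CForm.size]; omega
    · have := ihb x h; simp [CForm.size]; omega
  | capp c a ih =>
    intro x hx
    simp only [CForm.csubs, List.mem_cons] at hx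
    rcases hx with h | h
    · subst h; simp [CForm.size]
    · have := ih x h; simp [CForm.size]; omega
  | _ => intro x hx; simp [CForm.csubs] at hx

lemma bigAnd_size_le {δ : Type} (L : List (PForm δ)) (k : ℕ)
    (h : ∀ p ∈ L, p.size ≤ k) :
    (bigAnd L).size ≤ L.length * (k + 1) + 1 := by
  induction L with
  | nil => simp [bigAnd, PForm.size]
  | cons a l ih =>
    have ha := h a (by simp)
    have hl := ih (fun p hp => h p (by simp [hp]))
    simp only [bigAnd, List.foldr_cons, List.length_cons] at *
    simp only [PForm.size]
    calc a.size + (List.foldr PForm.and PForm.tru l).size + 1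
        ≤ k + (l.length * (k + 1) + 1) + 1 := by omega
      _ = (l.length + 1) * (k + 1) + 1 := by ring

/-- The equivalid formula has polynomial size. -/
theorem phiE_size_polynomial {γ α : Type} [DecidableEq γ] (φ : CForm γ α) :
    (phiE φ).size ≤ 8 * φ.size ^ 4 := by
  set n := φ.size with hn
  have hn1 : 1 ≤ n := cform_size_pos φ
  set L := (φ.csubs).flatMap fun x =>
      ((φ.csubs).filter (fun y => decide (y.1 = x.1))).map fun y =>
        impF (impF x.2.dec y.2.dec)
          (impF (.atom (Sum.inr x)) (.atom (Sum.inr y))) with hL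
  have hm : φ.csubs.length + 1 ≤ n := csubs_length φ
  -- length bound on L
  have hLlen : L.length ≤ φ.csubs.length * φ.csubs.length := by
    rw [hL, List.length_flatMap]
    calc ((φ.csubs).map fun x =>
          (((φ.csubs).filter (fun y => decide (y.1 = x.1))).map fun y =>
            impF (impF x.2.dec y.2.dec)
              (impF (.atom (Sum.inr x)) (.atom (Sum.inr y)))).length).sum
        ≤ ((φ.csubs).map fun _ => φ.csubs.length).sum := by
          apply List.sum_le_sum
          intro x hx
          simp only [List.length_map]
          exact List.length_filter_le _ _
      _ = φ.csubs.length * φ.csubs.length := by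
          rw [List.map_const', List.sum_replicate, smul_eq_mul]
  -- each element of L has size ≤ 2*(n-1)+5
  have hLmem : ∀ p ∈ L, p.size ≤ 2 * n + 3 := by
    intro p hp
    rw [hL] at hp
    simp only [List.mem_flatMap, List.mem_map, List.mem_filter] at hp
    obtain ⟨x, hx, y, ⟨hy, _⟩, rfl⟩ := hp
    have hxs := csubs_mem_size φ x hx
    have hys := csubs_mem_size φ y hy
    have hxd := dec_size x.2
    have hyd := dec_size y.2
    simp only [impF_size, negNNF_size, atom_size]
    omega
  have hbig := bigAnd_size_le L (2 * n + 3) hLmem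
  have hdec := dec_size φ
  have hsize : (phiE φ).size = (bigAnd L).size + φ.dec.size + 1 := by
    simp [phiE, impF_size, hL]
  rw [hsize]
  have h1 : (bigAnd L).size ≤ (n - 1) * (n - 1) * (2 * n + 4) + 1 := by
    calc (bigAnd L).size ≤ L.length * (2 * n + 4) + 1 := hbig
      _ ≤ (n - 1) * (n - 1) * (2 * n + 4) + 1 := by
          have : L.length ≤ (n - 1) * (n - 1) :=
            hLlen.trans (Nat.mul_le_mul (by omega) (by omega))
          exact by nlinarith
  have key := arith_key n hn1
  omega
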